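/- Let A and B be bases of a matroid M, and let B = B_1 ⊔ ... ⊔ B_k be a partition of B. Then there exists a partition A = A_1 ⊔ ... ⊔ A_k such that (A \ A_i) ∪ B_i is a basis of M for every 1 ≤ i ≤ k. -/

import Mathlib

/-!
For `k = 2` this is matroid intersection: a common independent set `I ⊆ A` of size `|B₁|` of
`M ／ B₂` and of the dual of `(M ／ B₁) ↾ A` makes both `I ∪ B₂` and `(A \ I) ∪ B₁` bases. The
min-max condition of Edmonds' intersection theorem reduces to submodularity of the rank on
`S ∪ B₁` and `S ∪ B₂`, and the intersection theorem holds for abstract rank functions by deleting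
or contracting one element. For general `k`, split off `B_k`, exchange it against
`A_k := A \ I`, and recurse in `M ／ (A \ I)`, where `I` and `B_1 ∪ ⋯ ∪ B_{k-1}` are bases.
-/

section

open Set Function

variable {α : Type*}

structure IsRankFunction (f : Set α → ℕ) : Prop where
  empty : f ∅ = 0
  mono : Monotone f
  insert_le : ∀ (e : α) (X : Set α), f (insert e X) ≤ f X + 1
  submod : ∀ X Y : Set α, f (X ∪ Y) + f (X ∩ Y) ≤ f X + f Y

namespace IsRankFunction

variable {f g : Set α → ℕ}

lemma union_le_add_ncard (hf : IsRankFunction f) (T : Set α) {S : Set α} (hS : S.Finite) :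
    f (T ∪ S) ≤ f T + S.ncard := by
  induction S, hS using Set.Finite.induction_on with
  | empty => simp
  | @insert e S heS hS ih =>
    rw [union_insert, ncard_insert_of_notMem heS hS]
    have := hf.insert_le e (T ∪ S)
    omega

lemma eq_one_of_lt_insert (hf : IsRankFunction f) {e : α} {X : Set α}
    (h : f X < f (insert e X)) : f {e} = 1 := by
  have hsub := hf.submod X {e}
  have hle := hf.insert_le e ∅
  rw [union_singleton] at hsub
  rw [insert_empty_eq, hf.empty] at hle
  omega

lemma contract (hf : IsRankFunction f) {K : Set α} (hK : f K = K.ncard) :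
    IsRankFunction (fun X => f (X ∪ K) - K.ncard) := by
  have hK_le : ∀ X, K.ncard ≤ f (X ∪ K) := fun X => hK ▸ hf.mono subset_union_right
  refine ⟨by simp [hK], fun X Y hXY => ?_, fun e X => ?_, fun X Y => ?_⟩
  · have := hf.mono (union_subset_union_left K hXY)
    omega
  · have := hf.insert_le e (X ∪ K)
    simp only [insert_union]
    omega
  · have := hf.submod (X ∪ K) (Y ∪ K)
    rw [← union_union_distrib_right, ← inter_union_distrib_right] at this
    have := hK_le (X ∪ Y)
    have := hK_le (X ∩ Y)
    omega

/-- The rank function of the dual of the restriction of `g` to `D`. -/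
lemma dual (hg : IsRankFunction g) {D : Set α} (hD : D.Finite) :
    IsRankFunction (fun X => (D ∩ X).ncard + g (D \ X) - g D) := by
  have hle : ∀ X, g D ≤ (D ∩ X).ncard + g (D \ X) := fun X => by
    have := hg.union_le_add_ncard (D \ X) (hD.inter_of_left X)
    rwa [sdiff_union_inter, add_comm] at this
  refine ⟨by simp, fun X Y hXY => ?_, fun e X => ?_, fun X Y => ?_⟩
  · have hsub : D \ X ⊆ (D \ Y) ∪ ((D ∩ Y) \ (D ∩ X)) := by
      rintro x ⟨hxD, hxX⟩
      by_cases hxY : x ∈ Y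
      · exact Or.inr ⟨⟨hxD, hxY⟩, fun h => hxX h.2⟩
      · exact Or.inl ⟨hxD, hxY⟩
    have := (hg.mono hsub).trans (hg.union_le_add_ncard _ (hD.inter_of_left Y).sdiff)
    have := ncard_sdiff (inter_subset_inter_right D hXY) (hD.inter_of_left X)
    have := ncard_le_ncard (inter_subset_inter_right D hXY) (hD.inter_of_left Y)
    have := hle X
    have := hle Y
    omega
  · have hsub : D ∩ insert e X ⊆ insert e (D ∩ X) := fun x ⟨hxD, hx⟩ => hx.imp id (⟨hxD, ·⟩)
    have := (ncard_le_ncard hsub ((hD.inter_of_left X).insert e)).trans (ncard_insert_le e _)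
    have := hg.mono (sdiff_subset_sdiff_right (subset_insert e X) : D \ insert e X ⊆ D \ X)
    have := hle X
    have := hle (insert e X)
    omega
  · have hcard := ncard_union_add_ncard_inter (D ∩ X) (D ∩ Y) (hD.inter_of_left X)
      (hD.inter_of_left Y)
    rw [← inter_union_distrib_left, ← inter_inter_distrib_left] at hcard
    have hsubmod := hg.submod (D \ X) (D \ Y)
    rw [← sdiff_inter, sdiff_inter_sdiff] at hsubmod
    have := hle X
    have := hle Y
    have := hle (X ∪ Y)
    have := hle (X ∩ Y)
    omega

/-- If the min-max condition on `insert e E` fails after deleting `e` (witnessed by `S₀`), it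
holds with one more unit after contracting `e`. -/
lemma add_one_le_insert_add_insert (hf : IsRankFunction f) (hg : IsRankFunction g)
    {E S₀ T : Set α} {e : α} {k : ℕ} (heE : e ∉ E)
    (h : ∀ S ⊆ insert e E, k ≤ f S + g (insert e E \ S))
    (hS₀E : S₀ ⊆ E) (hS₀ : f S₀ + g (E \ S₀) < k) (hTE : T ⊆ E) :
    k + 1 ≤ f (insert e T) + g (insert e (E \ T)) := by
  have heS₀ : e ∉ S₀ := fun he => heE (hS₀E he)
  have hinter := h (S₀ ∩ T) (inter_subset_left.trans (hS₀E.trans (subset_insert e E)))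
  have hunion := h (insert e (S₀ ∪ T)) (insert_subset_insert (union_subset hS₀E hTE))
  have hf_submod := hf.submod S₀ (insert e T)
  have hg_submod := hg.submod (E \ S₀) (insert e (E \ T))
  rw [insert_sdiff_of_notMem _ (fun he => heS₀ he.1)] at hinter
  rw [insert_sdiff_of_mem _ (mem_insert e _), sdiff_insert_of_notMem heE] at hunion
  rw [union_insert, inter_insert_of_notMem heS₀] at hf_submod
  rw [union_insert, ← sdiff_inter, inter_insert_of_notMem (fun he => heE he.1),
    sdiff_inter_sdiff] at hg_submod
  omega

/-- Edmonds' matroid intersection theorem for rank functions. -/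
theorem exists_common_indep_of_forall_le (hf : IsRankFunction f) (hg : IsRankFunction g)
    {E : Set α} (hE : E.Finite) {k : ℕ} (h : ∀ S ⊆ E, k ≤ f S + g (E \ S)) :
    ∃ I ⊆ E, f I = I.ncard ∧ g I = I.ncard ∧ k ≤ I.ncard := by
  induction E, hE using Set.Finite.induction_on generalizing f g k with
  | empty =>
    exact ⟨∅, subset_rfl, by simp [hf.empty], by simp [hg.empty],
      by simpa [hf.empty, hg.empty] using h ∅⟩
  | @insert e E heE hE ih =>
    by_cases hdelete : ∀ S ⊆ E, k ≤ f S + g (E \ S)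
    · obtain ⟨I, hIE, hfI, hgI, hkI⟩ := ih hf hg hdelete
      exact ⟨I, hIE.trans (subset_insert e E), hfI, hgI, hkI⟩
    push Not at hdelete
    obtain ⟨S₀, hS₀E, hS₀⟩ := hdelete
    have hfe : f {e} = 1 := by
      refine hf.eq_one_of_lt_insert (X := S₀) ?_
      have := h (insert e S₀) (insert_subset_insert hS₀E)
      rw [insert_sdiff_of_mem _ (mem_insert e _), sdiff_insert_of_notMem heE] at this
      omega
    have hge : g {e} = 1 := by
      refine hg.eq_one_of_lt_insert (X := E \ S₀) ?_
      have := h S₀ (hS₀E.trans (subset_insert e E))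
      rw [insert_sdiff_of_notMem _ (fun he => heE (hS₀E he))] at this
      omega
    obtain ⟨I, hIE, hfI, hgI, hkI⟩ := ih (hf.contract (hfe.trans (ncard_singleton e).symm))
      (hg.contract (hge.trans (ncard_singleton e).symm)) (k := k - 1) fun S hS => by
        have := hf.add_one_le_insert_add_insert hg heE h hS₀E hS₀ hS
        have := hf.mono (singleton_subset_iff.2 (mem_insert e S))
        have := hg.mono (singleton_subset_iff.2 (mem_insert e (E \ S)))
        simp only [ncard_singleton, union_singleton]
        omega
    have heI : e ∉ I := fun he => heE (hIE he)
    have := hf.mono (singleton_subset_iff.2 (mem_insert e I))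
    have := hg.mono (singleton_subset_iff.2 (mem_insert e I))
    simp only [ncard_singleton, union_singleton] at hfI hgI
    refine ⟨insert e I, insert_subset_insert hIE, ?_, ?_, ?_⟩ <;>
      rw [ncard_insert_of_notMem heI (hE.subset hIE)] <;> omega

end IsRankFunction

lemma Set.iUnion_fin_succ' {k : ℕ} (s : Fin (k + 1) → Set α) :
    ⋃ i, s i = (⋃ i : Fin k, s i.castSucc) ∪ s (Fin.last k) := by
  ext x
  simp [Fin.exists_fin_succ']

lemma Fin.pairwise_disjoint_lastCases {β : Type*} [PartialOrder β] [OrderBot β] {k : ℕ} {s : β}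
    {t : Fin k → β} (ht : Pairwise (Disjoint on t)) (hst : ∀ i, Disjoint s (t i)) :
    Pairwise (Disjoint on (Fin.lastCases s t : Fin (k + 1) → β)) := by
  intro i j hij
  induction i using Fin.lastCases <;> induction j using Fin.lastCases
  · exact absurd rfl hij
  · simpa [onFun] using hst _
  · simpa [onFun] using (hst _).symm
  · simpa [onFun] using ht fun h => hij (congrArg _ h)

namespace Matroid

variable {M : Matroid α} {A B B₁ B₂ I S X : Set α}

noncomputable def rk (M : Matroid α) (X : Set α) : ℕ := (M.eRk X).toNat

lemma Indep.rk_eq_ncard (hI : M.Indep I) : M.rk I = I.ncard := by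
  rw [rk, hI.eRk_eq_encard, ncard_def]

lemma IsBase.rk_eq_ncard_of_subset (hB : M.IsBase B) (hBX : B ⊆ X) : M.rk X = B.ncard := by
  have := (M.eRk_mono hBX).antisymm' (hB.eRk_eq_eRank ▸ M.eRk_le_eRank X)
  rw [rk, this, hB.indep.eRk_eq_encard, ncard_def]

section RankFinite

variable [M.RankFinite]

lemma cast_rk (M : Matroid α) [M.RankFinite] (X : Set α) : (M.rk X : ℕ∞) = M.eRk X :=
  ENat.natCast_toNat (eRk_ne_top_iff.2 (M.isRkFinite_set X))

lemma rk_le_ncard (M : Matroid α) [M.RankFinite] {X : Set α} (hX : X.Finite) :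
    M.rk X ≤ X.ncard := by
  have := M.eRk_le_encard X
  rwa [← cast_rk, ← hX.cast_ncard_eq, Nat.cast_le] at this

lemma isRankFunction_rk (M : Matroid α) [M.RankFinite] : IsRankFunction M.rk where
  empty := by simp [rk]
  mono X Y hXY := by
    have := M.eRk_mono hXY
    rwa [← cast_rk, ← cast_rk, Nat.cast_le] at this
  insert_le e X := by
    have := M.eRk_insert_le_add_one e X
    rwa [← cast_rk, ← cast_rk, ← Nat.cast_one, ← Nat.cast_add, Nat.cast_le] at this
  submod X Y := by
    have := M.eRk_inter_add_eRk_union_le X Y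
    simp only [← cast_rk, ← Nat.cast_add, Nat.cast_le] at this
    omega

lemma IsBase.isBase_of_ncard_le_rk (hB : M.IsBase B) (hS : S.Finite) (hSr : S.ncard ≤ M.rk S)
    (hBr : B.ncard ≤ M.rk S) : M.IsBase S := by
  have hSi : M.Indep S := by
    rw [indep_iff_eRk_eq_encard_of_finite hS, ← cast_rk, ← hS.cast_ncard_eq,
      (M.rk_le_ncard hS).antisymm hSr]
  refine hSi.isBase_of_eRk_ge hS ?_
  rw [← hB.encard_eq_eRank, ← cast_rk, ← hB.finite.cast_ncard_eq]
  exact_mod_cast hBr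

lemma Indep.ncard_add_ncard_le_rk_add_rk (hS : M.Indep S) (hB : M.IsBase (B₁ ∪ B₂))
    (hB₁₂ : Disjoint B₁ B₂) : S.ncard + (B₁ ∪ B₂).ncard ≤ M.rk (S ∪ B₁) + M.rk (S ∪ B₂) := by
  have := M.isRankFunction_rk.submod (S ∪ B₁) (S ∪ B₂)
  rwa [← union_union_distrib_left, ← union_inter_distrib_left, hB₁₂.inter_eq, union_empty,
    hB.rk_eq_ncard_of_subset subset_union_right, hS.rk_eq_ncard, add_comm] at this

theorem IsBase.exists_subset_rk_union_eq (hA : M.IsBase A) (hB : M.IsBase (B₁ ∪ B₂))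
    (hB₁₂ : Disjoint B₁ B₂) : ∃ I ⊆ A, M.rk (I ∪ B₂) = I.ncard + B₂.ncard ∧
      M.rk ((A \ I) ∪ B₁) = A.ncard ∧ B₁.ncard ≤ I.ncard := by
  have hr := M.isRankFunction_rk
  have hB₁ : M.Indep B₁ := hB.indep.subset subset_union_left
  have hB₂ : M.Indep B₂ := hB.indep.subset subset_union_right
  have hB₁_le (X : Set α) : B₁.ncard ≤ M.rk (X ∪ B₁) :=
    hB₁.rk_eq_ncard ▸ hr.mono subset_union_right
  have hB₂_le (X : Set α) : B₂.ncard ≤ M.rk (X ∪ B₂) :=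
    hB₂.rk_eq_ncard ▸ hr.mono subset_union_right
  have hA_card : A.ncard = B₁.ncard + B₂.ncard := by
    rw [← ncard_union_eq hB₁₂ hB₁.finite hB₂.finite, hA.ncard_eq_ncard_of_isBase hB]
  have hAB₁ : M.rk (A ∪ B₁) = A.ncard := hA.rk_eq_ncard_of_subset subset_union_left
  obtain ⟨I, hIA, hfI, hgI, hkI⟩ := (hr.contract hB₂.rk_eq_ncard).exists_common_indep_of_forall_le
    ((hr.contract hB₁.rk_eq_ncard).dual hA.finite) hA.finite (k := B₁.ncard) fun S hSA => by
      have := (hA.indep.subset hSA).ncard_add_ncard_le_rk_add_rk hB hB₁₂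
      rw [ncard_union_eq hB₁₂ hB₁.finite hB₂.finite] at this
      have := ncard_sdiff hSA (hA.finite.subset hSA)
      have := ncard_le_ncard hSA hA.finite
      have := hB₁_le S
      have := hB₂_le S
      simp only [sdiff_sdiff_cancel_left hSA, inter_eq_right.2 sdiff_subset]
      omega
  rw [inter_eq_right.2 hIA] at hgI
  have hA_sub : A ⊆ ((A \ I) ∪ B₁) ∪ I :=
    subset_union_left.trans (sdiff_union_self.symm.subset.trans
      (union_subset_union_left I subset_union_left))
  have hA_le := hr.union_le_add_ncard ((A \ I) ∪ B₁) (hA.finite.subset hIA)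
  rw [hA.rk_eq_ncard_of_subset hA_sub] at hA_le
  have := hB₁_le (A \ I)
  have := hB₂_le I
  refine ⟨I, hIA, by omega, by omega, hkI⟩

theorem IsBase.exists_partition_exchange_pair (hA : M.IsBase A) (hB : M.IsBase (B₁ ∪ B₂))
    (hB₁₂ : Disjoint B₁ B₂) :
    ∃ I ⊆ A, M.IsBase (I ∪ B₂) ∧ M.IsBase ((A \ I) ∪ B₁) ∧ Disjoint (A \ I) B₁ := by
  obtain ⟨I, hIA, hrk_I, hrk_AI, hkI⟩ := hA.exists_subset_rk_union_eq hB hB₁₂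
  have hB₁ : M.Indep B₁ := hB.indep.subset subset_union_left
  have hB₂ : M.Indep B₂ := hB.indep.subset subset_union_right
  have hA_card : A.ncard = B₁.ncard + B₂.ncard := by
    rw [← ncard_union_eq hB₁₂ hB₁.finite hB₂.finite, hA.ncard_eq_ncard_of_isBase hB]
  have hIfin := hA.finite.subset hIA
  have hfin : ((A \ I) ∪ B₁).Finite := hA.finite.sdiff.union hB₁.finite
  have := ncard_union_le I B₂
  have := ncard_union_add_ncard_inter (A \ I) B₁ hA.finite.sdiff hB₁.finite
  have := ncard_sdiff hIA hIfin
  have := M.rk_le_ncard hfin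
  have hinter : ((A \ I) ∩ B₁).ncard = 0 := by omega
  refine ⟨I, hIA, hA.isBase_of_ncard_le_rk (hIfin.union hB₂.finite) (by omega) (by omega),
    hA.isBase_of_ncard_le_rk hfin (by omega) (by omega), ?_⟩
  rwa [disjoint_iff_inter_eq_empty, ← ncard_eq_zero (hA.finite.sdiff.inter_of_left B₁)]

theorem IsBase.exists_partition_exchange (hA : M.IsBase A) (hB : M.IsBase B) {k : ℕ}
    {Bp : Fin k → Set α} (hdisj : Pairwise (Disjoint on Bp)) (hunion : ⋃ i, Bp i = B) :
    ∃ Ap : Fin k → Set α, Pairwise (Disjoint on Ap) ∧ ⋃ i, Ap i = A ∧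
      ∀ i, M.IsBase ((A \ Ap i) ∪ Bp i) := by
  induction k generalizing M A B with
  | zero =>
    obtain rfl : B = ∅ := by simp [← hunion]
    obtain rfl : A = ∅ := (hB.eq_of_subset_isBase hA (empty_subset A)).symm
    exact ⟨Fin.elim0, fun i => i.elim0, by simp, fun i => i.elim0⟩
  | succ k ih =>
    rw [iUnion_fin_succ'] at hunion
    obtain ⟨I, hIA, hbase_last, hbase_init, hdisj_init⟩ :=
      hA.exists_partition_exchange_pair (hunion ▸ hB)
        (disjoint_iUnion_left.2 fun i => hdisj (Fin.castSucc_lt_last i).ne)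
    have hAI : M.Indep (A \ I) := hA.indep.subset sdiff_subset
    obtain ⟨Ap, hApd, hApu, hAp⟩ := ih (M := M ／ (A \ I)) (A := I)
      (hAI.contract_isBase_iff.2 ⟨by rwa [union_sdiff_cancel hIA], disjoint_sdiff_right⟩)
      (hAI.contract_isBase_iff.2 ⟨by rwa [union_comm], hdisj_init.symm⟩)
      (hdisj.comp_of_injective (Fin.castSucc_injective k)) rfl
    have hApI (i : Fin k) : Ap i ⊆ I := hApu ▸ subset_iUnion Ap i
    refine ⟨Fin.lastCases (A \ I) Ap, Fin.pairwise_disjoint_lastCases hApd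
      fun i => disjoint_sdiff_left.mono_right (hApI i), ?_, Fin.lastCases ?_ fun i => ?_⟩
    · rw [iUnion_fin_succ']
      simpa [hApu] using hIA
    · simpa [sdiff_sdiff_cancel_left hIA] using hbase_last
    · have := (hAI.contract_isBase_iff.1 (hAp i)).1
      simp only [Fin.lastCases_castSucc]
      rwa [← sdiff_union_sdiff_cancel hIA (hApI i), union_comm (A \ I), union_right_comm]

end RankFinite

end Matroid

end

/-- For bases `A, B` of a matroid and a partition `B = B₁ ⊔ ... ⊔ B_k`, there is a
partition `A = A₁ ⊔ ... ⊔ A_k` with `(A \ A_i) ∪ B_i` a basis for every `i`. -/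
theorem partition_exchange_into_A {α : Type*} (M : Matroid α) (hfin : M.E.Finite)
    (A B : Set α) (hA : M.IsBase A) (hB : M.IsBase B)
    (k : ℕ) (Bp : Fin k → Set α)
    (hdisj : ∀ i j, i ≠ j → Disjoint (Bp i) (Bp j))
    (hunion : (⋃ i, Bp i) = B) :
    ∃ Ap : Fin k → Set α,
      (∀ i j, i ≠ j → Disjoint (Ap i) (Ap j)) ∧
      (⋃ i, Ap i) = A ∧
      ∀ i, M.IsBase ((A \ Ap i) ∪ Bp i) := by
  have : M.Finite := ⟨hfin⟩
  exact hA.exists_partition_exchange hB hdisj hunion
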